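/- Let Φ : I → ℝ be a convex function on an interval I of positive real numbers that is continuously differentiable on the interior of I, let T, V be bounded linear invertible operators on a complex Hilbert space H, and let 0 < m < M with [m², M²] contained in the interior of I and m‖Tx‖ ≤ ‖Vx‖ ≤ M‖Tx‖ for all x ∈ H. Then for every x ∈ H with x ≠ 0, writing r := ‖Vx‖²/‖Tx‖², in the operator order: ⊙_Φ(V,T) ≤ Φ(r)|T|² + ⊙_{Φ'·ℓ}(V,T) − r·⊙_{Φ'}(V,T) ≤ Φ(r)|T|² + Φ'(r)(|V|² − r|T|²) + [Φ'(M²) − Φ'(m²)]·⊙_{|·|,r}(V,T), where ⊙_{|·|,r}(V,T) := T* |(T*)⁻¹(|V|² − r|T|²)T⁻¹| T, ℓ is the identity function, ⊙_{Φ'·ℓ}(V,T) = T* (Φ'(X)·X) T and ⊙_{Φ'}(V,T) = T* Φ'(X) T with X = |VT⁻¹|². -/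

import Mathlib

variable {H : Type*} [NormedAddCommGroup H] [InnerProductSpace ℂ H] [CompleteSpace H]

/-- `X = |VT⁻¹|² = (T*)⁻¹ V* V T⁻¹`. -/
noncomputable def qX (V T : (H →L[ℂ] H)ˣ) : H →L[ℂ] H :=
  star (↑(T⁻¹) : H →L[ℂ] H) * (star (V : H →L[ℂ] H) * (V : H →L[ℂ] H)) * (↑(T⁻¹) : H →L[ℂ] H)

/-- The quadratic operator perspective `⊙_Φ(V,T) = T* Φ(X) T`. -/
noncomputable def qPersp (Φ : ℝ → ℝ) (V T : (H →L[ℂ] H)ˣ) : H →L[ℂ] H :=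
  star (T : H →L[ℂ] H) * cfc Φ (qX V T) * (T : H →L[ℂ] H)

/-- `|T|² = T*T`. -/
noncomputable def modSq (T : (H →L[ℂ] H)ˣ) : H →L[ℂ] H :=
  star (T : H →L[ℂ] H) * (T : H →L[ℂ] H)

/-- `⊙_{|·|,t}(V,T) = T* |X - t·1| T`. -/
noncomputable def qAbsPersp (t : ℝ) (V T : (H →L[ℂ] H)ˣ) : H →L[ℂ] H :=
  star (T : H →L[ℂ] H) * cfc (fun s : ℝ => |s|) (qX V T - t • (1 : H →L[ℂ] H)) *
    (T : H →L[ℂ] H)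

/-!
The spectrum of `X = |VT⁻¹|²` lies in `[m², M²]`, since `m²‖y‖² ≤ ⟪X y, y⟫ ≤ M²‖y‖²`, and so does
`r`. For `s, r ∈ [m², M²]`, convexity gives the tangent-line bound `Φ s ≤ Φ r + Φ' s (s - r)`, and
monotonicity of `Φ'` gives `(Φ' s - Φ' r)(s - r) ≤ (Φ'(M²) - Φ'(m²))|s - r|`. The continuous
functional calculus turns these scalar inequalities on the spectrum into operator inequalities in
`X`, and conjugation by `T`, being order preserving and linear in the function, turns them into
the two perspective inequalities.
-/

open Set ContinuousLinearMap

theorem ConvexOn.add_mul_sub_le_of_hasDerivAt {S : Set ℝ} {f : ℝ → ℝ} {f' x y : ℝ}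
    (hf : ConvexOn ℝ S f) (hx : x ∈ S) (hy : y ∈ S) (hd : HasDerivAt f f' x) :
    f x + f' * (y - x) ≤ f y := by
  rcases lt_trichotomy x y with hxy | rfl | hyx
  · have := hf.le_slope_of_hasDerivAt hx hy hxy hd
    rw [slope_def_field, le_div_iff₀ (sub_pos.2 hxy)] at this
    linarith
  · simp
  · have := hf.slope_le_of_hasDerivAt hy hx hyx hd
    rw [slope_def_field, div_le_iff₀ (sub_pos.2 hyx)] at this
    linarith

theorem ConvexOn.monotoneOn_of_hasDerivAt {S : Set ℝ} {f f' : ℝ → ℝ} (hf : ConvexOn ℝ S f)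
    (hd : ∀ x ∈ S, HasDerivAt f (f' x) x) : MonotoneOn f' S := by
  intro x hx y hy hxy
  rcases hxy.eq_or_lt with rfl | hxy
  · rfl
  exact (hf.le_slope_of_hasDerivAt hx hy hxy (hd x hx)).trans
    (hf.slope_le_of_hasDerivAt hx hy hxy (hd y hy))

theorem MonotoneOn.sub_mul_sub_le_mul_abs {g : ℝ → ℝ} {a b s r : ℝ}
    (hg : MonotoneOn g (Icc a b)) (hs : s ∈ Icc a b) (hr : r ∈ Icc a b) :
    (g s - g r) * (s - r) ≤ (g b - g a) * |s - r| := by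
  have ha : a ∈ Icc a b := left_mem_Icc.2 (hs.1.trans hs.2)
  have hb : b ∈ Icc a b := right_mem_Icc.2 (hs.1.trans hs.2)
  rcases le_total s r with hsr | hrs
  · rw [abs_of_nonpos (sub_nonpos.2 hsr)]
    nlinarith [hg hs hr hsr, hg ha hs hs.1, hg hr hb hr.2]
  · rw [abs_of_nonneg (sub_nonneg.2 hrs)]
    nlinarith [hg hr hs hrs, hg ha hr hr.1, hg hs hb hs.2]

theorem sq_div_sq_mem_Icc {a b m M : ℝ} (hm : 0 ≤ m) (hb : 0 < b) (hma : m * b ≤ a)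
    (haM : a ≤ M * b) : a ^ 2 / b ^ 2 ∈ Icc (m ^ 2) (M ^ 2) := by
  rw [← div_pow]
  have hlow : m ≤ a / b := (le_div_iff₀ hb).2 hma
  exact ⟨pow_le_pow_left₀ hm hlow 2, pow_le_pow_left₀ (hm.trans hlow) ((div_le_iff₀ hb).2 haM) 2⟩

theorem reApplyInnerSelf_star_mul_self_sub_algebraMap (A : H →L[ℂ] H) (c : ℝ) (y : H) :
    (star A * A - algebraMap ℝ (H →L[ℂ] H) c).reApplyInnerSelf y = ‖A y‖ ^ 2 - c * ‖y‖ ^ 2 := by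
  simp [reApplyInnerSelf_apply, star_eq_adjoint, adjoint_inner_left, inner_sub_left,
    Algebra.algebraMap_eq_smul_one, ← Complex.coe_smul, inner_smul_left, ← Complex.ofReal_pow]

theorem algebraMap_le_star_mul_self {A : H →L[ℂ] H} {m : ℝ} (hm : 0 ≤ m)
    (h : ∀ y, m * ‖y‖ ≤ ‖A y‖) : algebraMap ℝ (H →L[ℂ] H) (m ^ 2) ≤ star A * A := by
  refine ⟨((IsSelfAdjoint.star_mul_self A).sub (.algebraMap _ (.all _))).isSymmetric, fun y => ?_⟩
  rw [reApplyInnerSelf_star_mul_self_sub_algebraMap, sub_nonneg, ← mul_pow]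
  exact pow_le_pow_left₀ (by positivity) (h y) 2

theorem star_mul_self_le_algebraMap {A : H →L[ℂ] H} {M : ℝ}
    (h : ∀ y, ‖A y‖ ≤ M * ‖y‖) : star A * A ≤ algebraMap ℝ (H →L[ℂ] H) (M ^ 2) := by
  refine ⟨((IsSelfAdjoint.algebraMap _ (.all _)).sub (IsSelfAdjoint.star_mul_self A)).isSymmetric,
    fun y => ?_⟩
  rw [← neg_sub, reApplyInnerSelf_apply, neg_apply, inner_neg_left, map_neg,
    ← reApplyInnerSelf_apply, reApplyInnerSelf_star_mul_self_sub_algebraMap, neg_nonneg,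
    sub_nonpos, ← mul_pow]
  exact pow_le_pow_left₀ (norm_nonneg _) (h y) 2

theorem spectrum_star_mul_self_subset_Icc {A : H →L[ℂ] H} {m M : ℝ} (hm : 0 ≤ m)
    (hmA : ∀ y, m * ‖y‖ ≤ ‖A y‖) (hAM : ∀ y, ‖A y‖ ≤ M * ‖y‖) :
    spectrum ℝ (star A * A) ⊆ Icc (m ^ 2) (M ^ 2) := fun s hs =>
  ⟨(algebraMap_le_iff_le_spectrum (.star_mul_self A)).1 (algebraMap_le_star_mul_self hm hmA) s hs,
    (le_algebraMap_iff_spectrum_le (.star_mul_self A)).1 (star_mul_self_le_algebraMap hAM) s hs⟩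

theorem qX_eq_star_mul_self (V T : (H →L[ℂ] H)ˣ) :
    qX V T = star ((V : H →L[ℂ] H) * ↑T⁻¹) * ((V : H →L[ℂ] H) * ↑T⁻¹) := by
  simp only [qX, star_mul, mul_assoc]

theorem isSelfAdjoint_qX (V T : (H →L[ℂ] H)ˣ) : IsSelfAdjoint (qX V T) :=
  qX_eq_star_mul_self V T ▸ .star_mul_self _

section Perspective

variable {V T : (H →L[ℂ] H)ˣ}

theorem spectrum_qX_subset_Icc {m M : ℝ} (hm : 0 ≤ m)
    (hTV : ∀ x, m * ‖(T : H →L[ℂ] H) x‖ ≤ ‖(V : H →L[ℂ] H) x‖ ∧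
      ‖(V : H →L[ℂ] H) x‖ ≤ M * ‖(T : H →L[ℂ] H) x‖) :
    spectrum ℝ (qX V T) ⊆ Icc (m ^ 2) (M ^ 2) := by
  have hVT (y : H) := hTV ((↑T⁻¹ : H →L[ℂ] H) y)
  simp only [← mul_apply_eq_comp, Units.mul_inv, one_apply_eq_self] at hVT
  rw [qX_eq_star_mul_self]
  exact spectrum_star_mul_self_subset_Icc hm (fun y => (hVT y).1) (fun y => (hVT y).2)

theorem qPersp_mono {f g : ℝ → ℝ} (hfg : ∀ s ∈ spectrum ℝ (qX V T), f s ≤ g s)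
    (hf : ContinuousOn f (spectrum ℝ (qX V T)) := by fun_prop)
    (hg : ContinuousOn g (spectrum ℝ (qX V T)) := by fun_prop) :
    qPersp f V T ≤ qPersp g V T :=
  star_left_conjugate_le_conjugate (cfc_mono hfg hf hg) _

theorem qPersp_add {f g : ℝ → ℝ} (hf : ContinuousOn f (spectrum ℝ (qX V T)) := by fun_prop)
    (hg : ContinuousOn g (spectrum ℝ (qX V T)) := by fun_prop) :
    qPersp (fun s => f s + g s) V T = qPersp f V T + qPersp g V T := by
  rw [qPersp, cfc_add _ f g hf hg, mul_add, add_mul, qPersp, qPersp]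

theorem qPersp_sub {f g : ℝ → ℝ} (hf : ContinuousOn f (spectrum ℝ (qX V T)) := by fun_prop)
    (hg : ContinuousOn g (spectrum ℝ (qX V T)) := by fun_prop) :
    qPersp (fun s => f s - g s) V T = qPersp f V T - qPersp g V T := by
  rw [qPersp, cfc_sub f g _ hf hg, mul_sub, sub_mul, qPersp, qPersp]

theorem qPersp_const_mul (c : ℝ) {f : ℝ → ℝ}
    (hf : ContinuousOn f (spectrum ℝ (qX V T)) := by fun_prop) :
    qPersp (fun s => c * f s) V T = c • qPersp f V T := by
  rw [qPersp, cfc_const_mul c f _ hf, mul_smul_comm, smul_mul_assoc, qPersp]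

theorem qPersp_const (c : ℝ) : qPersp (fun _ => c) V T = c • modSq T := by
  rw [qPersp, cfc_const c _ (isSelfAdjoint_qX V T), Algebra.algebraMap_eq_smul_one,
    mul_smul_comm, mul_one, smul_mul_assoc, modSq]

theorem qPersp_id : qPersp (fun s => s) V T = modSq V := by
  rw [qPersp, cfc_id' ℝ _ (isSelfAdjoint_qX V T), qX_eq_star_mul_self, modSq]
  calc _ = star ((V : H →L[ℂ] H) * ↑T⁻¹ * ↑T) * ((V : H →L[ℂ] H) * ↑T⁻¹ * ↑T) := by
        simp only [star_mul, mul_assoc]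
    _ = _ := by rw [mul_assoc, Units.inv_mul, mul_one]

theorem qAbsPersp_eq_qPersp (r : ℝ) : qAbsPersp r V T = qPersp (fun s => |s - r|) V T := by
  have hX := isSelfAdjoint_qX V T
  rw [qAbsPersp, qPersp,
    cfc_comp' (fun s => |s|) (fun s => s - r) _ (by fun_prop) (by fun_prop) hX,
    cfc_sub (fun s => s) (fun _ => r) _, cfc_id' ℝ _ hX, cfc_const r _ hX,
    Algebra.algebraMap_eq_smul_one]

end Perspective

theorem stmt10_general (I : Set ℝ)
    (Φ Φ' : ℝ → ℝ) (hΦ : ConvexOn ℝ I Φ)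
    (hΦ' : ∀ s ∈ interior I, HasDerivAt Φ (Φ' s) s)
    (hΦ'c : ContinuousOn Φ' (interior I))
    (T V : (H →L[ℂ] H)ˣ) (m M : ℝ) (hm : 0 < m)
    (hsub : Set.Icc (m ^ 2) (M ^ 2) ⊆ interior I)
    (hTV : ∀ x : H, m * ‖(T : H →L[ℂ] H) x‖ ≤ ‖(V : H →L[ℂ] H) x‖ ∧ ‖(V : H →L[ℂ] H) x‖ ≤ M * ‖(T : H →L[ℂ] H) x‖)
    (x : H) (hx : x ≠ 0) (r : ℝ) (hr : r = ‖(V : H →L[ℂ] H) x‖ ^ 2 / ‖(T : H →L[ℂ] H) x‖ ^ 2) :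
    qPersp Φ V T ≤
        Φ r • modSq T + qPersp (fun s => Φ' s * s) V T - r • qPersp Φ' V T ∧
      Φ r • modSq T + qPersp (fun s => Φ' s * s) V T - r • qPersp Φ' V T ≤
        Φ r • modSq T + Φ' r • (modSq V - r • modSq T) +
          (Φ' (M ^ 2) - Φ' (m ^ 2)) • qAbsPersp r V T := by
  have hspec := spectrum_qX_subset_Icc hm.le hTV
  have hTx : 0 < ‖(T : H →L[ℂ] H) x‖ :=
    norm_pos_iff.2 fun h => hx <|
      (homeomorphOfUnit T).injective (h.trans (map_zero (T : H →L[ℂ] H)).symm)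
  have hr_mem : r ∈ Icc (m ^ 2) (M ^ 2) := hr ▸ sq_div_sq_mem_Icc hm.le hTx (hTV x).1 (hTV x).2
  have hconv : ConvexOn ℝ (interior I) Φ := hΦ.subset interior_subset hΦ.1.interior
  have hmono : MonotoneOn Φ' (Icc (m ^ 2) (M ^ 2)) :=
    (hconv.monotoneOn_of_hasDerivAt hΦ').mono hsub
  have hΦ'_cont : ContinuousOn Φ' (spectrum ℝ (qX V T)) := hΦ'c.mono (hspec.trans hsub)
  have hΦ_cont : ContinuousOn Φ (spectrum ℝ (qX V T)) := fun s hs =>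
    (hΦ' s (hsub (hspec hs))).continuousAt.continuousWithinAt
  have hmid : Φ r • modSq T + qPersp (fun s => Φ' s * s) V T - r • qPersp Φ' V T =
      qPersp (fun s => Φ r + (Φ' s * s - r * Φ' s)) V T := by
    rw [qPersp_add, qPersp_sub, qPersp_const, qPersp_const_mul, add_sub_assoc]
  have hright : Φ r • modSq T + Φ' r • (modSq V - r • modSq T) +
      (Φ' (M ^ 2) - Φ' (m ^ 2)) • qAbsPersp r V T =
      qPersp (fun s => Φ r + Φ' r * (s - r) + (Φ' (M ^ 2) - Φ' (m ^ 2)) * |s - r|) V T := by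
    rw [qPersp_add, qPersp_add, qPersp_const, qPersp_const_mul (f := fun s => s - r),
      qPersp_const_mul (f := fun s => |s - r|), qPersp_sub, qPersp_id, qPersp_const,
      qAbsPersp_eq_qPersp]
  rw [hmid, hright]
  constructor
  · refine qPersp_mono fun s hs => ?_
    have hs_int := hsub (hspec hs)
    have htangent := hconv.add_mul_sub_le_of_hasDerivAt hs_int (hsub hr_mem) (hΦ' s hs_int)
    linarith
  · refine qPersp_mono fun s hs => ?_
    have hslope := hmono.sub_mul_sub_le_mul_abs (hspec hs) hr_mem
    linarith

theorem stmt10 (I : Set ℝ) (hIpos : I ⊆ Set.Ioi 0)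
    (Φ Φ' : ℝ → ℝ) (hΦ : ConvexOn ℝ I Φ)
    (hΦ' : ∀ s ∈ interior I, HasDerivAt Φ (Φ' s) s)
    (hΦ'c : ContinuousOn Φ' (interior I))
    (T V : (H →L[ℂ] H)ˣ) (m M : ℝ) (hm : 0 < m) (hmM : m < M)
    (hsub : Set.Icc (m ^ 2) (M ^ 2) ⊆ interior I)
    (hTV : ∀ x : H, m * ‖(T : H →L[ℂ] H) x‖ ≤ ‖(V : H →L[ℂ] H) x‖ ∧ ‖(V : H →L[ℂ] H) x‖ ≤ M * ‖(T : H →L[ℂ] H) x‖)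
    (x : H) (hx : x ≠ 0) (r : ℝ) (hr : r = ‖(V : H →L[ℂ] H) x‖ ^ 2 / ‖(T : H →L[ℂ] H) x‖ ^ 2) :
    qPersp Φ V T ≤
        Φ r • modSq T + qPersp (fun s => Φ' s * s) V T - r • qPersp Φ' V T ∧
      Φ r • modSq T + qPersp (fun s => Φ' s * s) V T - r • qPersp Φ' V T ≤
        Φ r • modSq T + Φ' r • (modSq V - r • modSq T) +
          (Φ' (M ^ 2) - Φ' (m ^ 2)) • qAbsPersp r V T :=
  stmt10_general I Φ Φ' hΦ hΦ' hΦ'c T V m M hm hsub hTV x hx r hr
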